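/- For the bistar B(m,n) with m ≤ n, we have r(B(m,n)) ≥ 2m + n + 2: the 2-coloring of K_{2m+n+1} formed by two disjoint blue cliques of sizes m+n+1 and m with all crossing edges red contains no monochromatic copy of B(m,n). -/

import Mathlib

open SimpleGraph

/-- The graph of edges of color `b` in the 2-coloring `c` of a complete graph. -/
def colorGraph {V : Type*} (c : Sym2 V → Bool) (b : Bool) : SimpleGraph V :=
  SimpleGraph.fromRel (fun u v => c s(u, v) = b)

/-- `G` occurs as a (not nec. induced) subgraph of `H`. -/
def ContainsCopy {V W : Type*} (G : SimpleGraph V) (H : SimpleGraph W) : Prop :=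
  ∃ f : V → W, Function.Injective f ∧ ∀ ⦃u v : V⦄, G.Adj u v → H.Adj (f u) (f v)

/-- The coloring `c` contains a monochromatic copy of `G`. -/
def HasMonoCopy {V W : Type*} (G : SimpleGraph V) (c : Sym2 W → Bool) : Prop :=
  ∃ b : Bool, ContainsCopy G (colorGraph c b)

/-- The (diagonal) Ramsey number of a graph `G`. -/
noncomputable def ramseyNumber {V : Type*} (G : SimpleGraph V) : ℕ :=
  sInf {r : ℕ | ∀ c : Sym2 (Fin r) → Bool, HasMonoCopy G c}

/-- The star `S n = K_{1,n}`: center `0`, `n` leaves. -/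
def starGraph (n : ℕ) : SimpleGraph (Fin (n + 1)) :=
  SimpleGraph.fromRel (fun u v => u = 0)

/-- The bistar `B(m,n)`: adjacent centers `inl 0`, `inl 1`, with `m` resp. `n` leaves. -/
def bistar (m n : ℕ) : SimpleGraph (Fin 2 ⊕ Fin m ⊕ Fin n) :=
  SimpleGraph.fromRel (fun u v =>
    (u = Sum.inl 0 ∧ v = Sum.inl 1) ∨
    (u = Sum.inl 0 ∧ ∃ i, v = Sum.inr (Sum.inl i)) ∨
    (u = Sum.inl 1 ∧ ∃ j, v = Sum.inr (Sum.inr j)))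

/-!
Split the vertices of `K_{2m+n+1}` into a side `A` of size `m+n+1` and a side `B` of size `m`,
and colour an edge blue iff its ends lie on the same side. A blue bistar is connected, so its
`m+n+2` vertices lie on one side, and both sides are too small. A red bistar respects the
bipartition `(A, B)`; each class of its own bipartition (a centre with the other centre's
leaves) has at least `m+1` vertices, so neither class fits into `B`.

As `ramseyNumber` is an infimum, the bound also needs some `r` that forces a monochromatic
`B(m,n)`. In a 2-colouring of `K_{2(m+n)+3}` every vertex has at least `m+n+1` neighbours in
its majority colour, and some `m+n+2` vertices share a majority colour `b`. Two of them joined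
by a `b`-edge are the centres of a `b`-coloured bistar; otherwise they span a clique of the
other colour, and any two of them are centres of a bistar of that colour.
-/

open Finset

theorem colorGraph_adj {V : Type*} (c : Sym2 V → Bool) (b : Bool) (u v : V) :
    (colorGraph c b).Adj u v ↔ u ≠ v ∧ c s(u, v) = b := by
  simp [colorGraph, Sym2.eq_swap]

theorem colorGraph_not_eq_compl {V : Type*} (c : Sym2 V → Bool) (b : Bool) :
    colorGraph c (!b) = (colorGraph c b)ᶜ := by
  ext u v
  simp only [compl_adj, colorGraph_adj, Bool.eq_not, ne_eq]
  tauto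

theorem containsCopy_bistar_iff {W : Type*} {m n : ℕ} {H : SimpleGraph W} :
    ContainsCopy (bistar m n) H ↔ ∃ f : Fin 2 ⊕ Fin m ⊕ Fin n → W, Function.Injective f ∧
      H.Adj (f (.inl 0)) (f (.inl 1)) ∧ (∀ i, H.Adj (f (.inl 0)) (f (.inr (.inl i)))) ∧
      ∀ j, H.Adj (f (.inl 1)) (f (.inr (.inr j))) := by
  constructor
  · rintro ⟨f, hf, hadj⟩
    refine ⟨f, hf, hadj ?_, fun i => hadj ?_, fun j => hadj ?_⟩ <;> simp [bistar]
  · rintro ⟨f, hf, h01, h0, h1⟩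
    refine ⟨f, hf, fun a a' h => ?_⟩
    simp only [bistar, fromRel_adj] at h
    obtain ⟨-, (⟨rfl, rfl⟩ | ⟨rfl, i, rfl⟩ | ⟨rfl, j, rfl⟩) |
      (⟨rfl, rfl⟩ | ⟨rfl, i, rfl⟩ | ⟨rfl, j, rfl⟩)⟩ := h
    exacts [h01, h0 i, h1 j, h01.symm, (h0 i).symm, (h1 j).symm]

theorem containsCopy_bistar_of_adj {W : Type*} [Fintype W] [DecidableEq W] {m n : ℕ}
    {H : SimpleGraph W} [DecidableRel H.Adj] {u v : W} (huv : H.Adj u v)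
    (hu : m + n + 1 ≤ H.degree u) (hv : n + 1 ≤ H.degree v) :
    ContainsCopy (bistar m n) H := by
  have hu_mem : u ∈ H.neighborFinset v := (mem_neighborFinset _ _ _).2 huv.symm
  have hv_mem : v ∈ H.neighborFinset u := (mem_neighborFinset _ _ _).2 huv
  obtain ⟨g, hg⟩ := Function.Embedding.exists_of_card_le_finset (α := Fin n)
    (s := (H.neighborFinset v).erase u) (by
      rw [Fintype.card_fin, card_erase_of_mem hu_mem, card_neighborFinset_eq_degree]; omega)
  obtain ⟨f, hf⟩ := Function.Embedding.exists_of_card_le_finset (α := Fin m)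
    (s := (H.neighborFinset u).erase v \ univ.map g) (by
      have := le_card_sdiff (univ.map g) ((H.neighborFinset u).erase v)
      rw [card_map, card_univ, Fintype.card_fin, card_erase_of_mem hv_mem,
        card_neighborFinset_eq_degree] at this
      rw [Fintype.card_fin]; omega)
  have hg_mem (j : Fin n) : g j ∈ (H.neighborFinset v).erase u := hg ⟨j, rfl⟩
  have hf_mem (i : Fin m) : f i ∈ (H.neighborFinset u).erase v \ univ.map g := hf ⟨i, rfl⟩
  simp only [mem_sdiff, mem_erase, mem_neighborFinset, mem_map, mem_univ, true_and,
    not_exists] at hg_mem hf_mem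
  refine containsCopy_bistar_iff.2 ⟨Sum.elim ![u, v] (Sum.elim f g), ?_, huv,
    fun i => (hf_mem i).1.2, fun j => (hg_mem j).2⟩
  refine Function.Injective.sumElim ?_ (f.injective.sumElim g.injective ?_) ?_
  · intro x y
    fin_cases x <;> fin_cases y <;> simp [huv.ne, huv.ne.symm]
  · exact fun i j h => (hf_mem i).2 j h.symm
  · intro x a
    fin_cases x <;> rcases a with i | j <;> simp only [Fin.zero_eta, Fin.mk_one,
      Matrix.cons_val_zero, Matrix.cons_val_one, Sum.elim_inl, Sum.elim_inr]
    exacts [(hf_mem i).1.2.ne, (hg_mem j).1.symm, (hf_mem i).1.1.symm, (hg_mem j).2.ne]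

theorem containsCopy_bistar_or_compl_of_le_degree {W : Type*} [Fintype W] [DecidableEq W]
    {m n : ℕ} (H : SimpleGraph W) [DecidableRel H.Adj] (S : Finset W) (hS : m + n + 2 ≤ #S)
    (hdeg : ∀ u ∈ S, m + n + 1 ≤ H.degree u) :
    ContainsCopy (bistar m n) H ∨ ContainsCopy (bistar m n) Hᶜ := by
  by_cases hadj : ∃ u ∈ S, ∃ v ∈ S, H.Adj u v
  · obtain ⟨u, hu, v, hv, huv⟩ := hadj
    exact .inl (containsCopy_bistar_of_adj huv (hdeg u hu) (by linarith [hdeg v hv]))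
  simp only [not_exists, not_and] at hadj
  -- now `S` is a clique of `Hᶜ`
  have hdeg_compl (u : W) (hu : u ∈ S) : m + n + 1 ≤ Hᶜ.degree u :=
    calc m + n + 1 ≤ #(S.erase u) := by rw [card_erase_of_mem hu]; omega
      _ ≤ Hᶜ.degree u := by
        rw [← card_neighborFinset_eq_degree]
        refine card_le_card fun v hv => ?_
        rw [mem_erase] at hv
        simp [hv.1.symm, hadj u hu v hv.2]
  obtain ⟨u, hu, v, hv, huv⟩ := one_lt_card.1 (by omega : 1 < #S)
  exact .inr (containsCopy_bistar_of_adj (H := Hᶜ) ⟨huv, hadj u hu v hv⟩ (hdeg_compl u hu)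
    (by linarith [hdeg_compl v hv]))

theorem containsCopy_bistar_or_compl {W : Type*} [Fintype W] [DecidableEq W] {m n : ℕ}
    (hW : 2 * (m + n) + 3 ≤ Fintype.card W) (H : SimpleGraph W) [DecidableRel H.Adj] :
    ContainsCopy (bistar m n) H ∨ ContainsCopy (bistar m n) Hᶜ := by
  set S : Finset W := {u | m + n + 1 ≤ H.degree u}
  have hS_compl (u : W) (hu : u ∈ Sᶜ) : m + n + 1 ≤ Hᶜ.degree u := by
    simp only [S, mem_compl, mem_filter, mem_univ, true_and, not_le] at hu
    rw [degree_compl]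
    omega
  have hcard : #S + #Sᶜ = Fintype.card W := card_add_card_compl S
  by_cases hS : m + n + 2 ≤ #S
  · exact containsCopy_bistar_or_compl_of_le_degree H S hS (by simp [S])
  · simpa [or_comm] using
      containsCopy_bistar_or_compl_of_le_degree Hᶜ Sᶜ (by omega) hS_compl

theorem hasMonoCopy_bistar {W : Type*} [Fintype W] {m n : ℕ}
    (hW : 2 * (m + n) + 3 ≤ Fintype.card W) (c : Sym2 W → Bool) :
    HasMonoCopy (bistar m n) c := by
  classical
  rcases containsCopy_bistar_or_compl hW (colorGraph c true) with h | h
  · exact ⟨true, h⟩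
  · exact ⟨false, colorGraph_not_eq_compl c true ▸ h⟩

theorem Fintype.card_le_card_filter_of_injective {α β : Type*} [Fintype α] [Fintype β]
    {f : α → β} (hf : Function.Injective f) {p : β → Prop} [DecidablePred p]
    (hp : ∀ a, p (f a)) : Fintype.card α ≤ #{b | p b} := by
  simpa using card_le_card_of_injOn f (s := univ) (fun a _ => by simp [hp]) hf.injOn

section Fibers

variable {W : Type*} [Fintype W] {m n : ℕ} {H : SimpleGraph W} (σ : W → Bool)

theorem ContainsCopy.bistar_le_card_fiber (h : ContainsCopy (bistar m n) H)
    (hσ : ∀ u v, H.Adj u v → σ u = σ v) : ∃ b, m + n + 2 ≤ #{w | σ w = b} := by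
  obtain ⟨f, hf, h01, h0, h1⟩ := containsCopy_bistar_iff.1 h
  have hfiber : ∀ a, σ (f a) = σ (f (.inl 0)) := by
    rintro (x | i | j)
    · fin_cases x
      exacts [rfl, (hσ _ _ h01).symm]
    · exact (hσ _ _ (h0 i)).symm
    · exact ((hσ _ _ h01).trans (hσ _ _ (h1 j))).symm
  refine ⟨σ (f (.inl 0)), ?_⟩
  have := Fintype.card_le_card_filter_of_injective hf (p := (σ · = σ (f (.inl 0)))) hfiber
  simp only [Fintype.card_sum, Fintype.card_fin] at this
  omega

theorem ContainsCopy.bistar_le_card_fibers (h : ContainsCopy (bistar m n) H)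
    (hσ : ∀ u v, H.Adj u v → σ u ≠ σ v) :
    ∃ b, n + 1 ≤ #{w | σ w = b} ∧ m + 1 ≤ #{w | σ w = !b} := by
  obtain ⟨f, hf, h01, h0, h1⟩ := containsCopy_bistar_iff.1 h
  have hσ1 : σ (f (.inl 1)) = !σ (f (.inl 0)) := Bool.eq_not.2 (hσ _ _ h01).symm
  refine ⟨σ (f (.inl 0)), ?_, ?_⟩
  · have hinj : Function.Injective fun o : Option (Fin n) => f (o.elim (.inl 0) (.inr ∘ .inr)) :=
      hf.comp (by rintro (_ | j) (_ | j') h <;> simp_all)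
    have := Fintype.card_le_card_filter_of_injective hinj (p := (σ · = σ (f (.inl 0)))) (by
      rintro (_ | j)
      · rfl
      · simpa [hσ1] using (hσ _ _ (h1 j)).symm)
    simpa using this
  · have hinj : Function.Injective fun o : Option (Fin m) => f (o.elim (.inl 1) (.inr ∘ .inl)) :=
      hf.comp (by rintro (_ | i) (_ | i') h <;> simp_all)
    have := Fintype.card_le_card_filter_of_injective hinj (p := (σ · = !σ (f (.inl 0)))) (by
      rintro (_ | i)
      · exact hσ1
      · exact Bool.eq_not.2 (hσ _ _ (h0 i)).symm)
    simpa using this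

theorem not_hasMonoCopy_bistar_of_card_fiber_le (hmn : m ≤ n) (c : Sym2 W → Bool)
    (hc : ∀ u v, u ≠ v → (c s(u, v) = true ↔ σ u = σ v))
    (htrue : #{w | σ w = true} ≤ m + n + 1) (hfalse : #{w | σ w = false} ≤ m) :
    ¬ HasMonoCopy (bistar m n) c := by
  rintro ⟨_ | _, h⟩
  · obtain ⟨b, hb, hb'⟩ := h.bistar_le_card_fibers σ fun u v huv heq => by
      rw [colorGraph_adj] at huv
      simpa [huv.2] using (hc u v huv.1).2 heq
    cases b <;> simp only [Bool.not_false, Bool.not_true] at hb' <;> omega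
  · obtain ⟨b, hb⟩ := h.bistar_le_card_fiber σ fun u v huv => by
      rw [colorGraph_adj] at huv
      exact (hc u v huv.1).1 huv.2
    cases b <;> omega

end Fibers

theorem HasMonoCopy.of_comp_map {V W W' : Type*} {G : SimpleGraph V} {c : Sym2 W' → Bool}
    {e : W → W'} (he : Function.Injective e) (h : HasMonoCopy G (c ∘ Sym2.map e)) :
    HasMonoCopy G c := by
  obtain ⟨b, f, hf, hadj⟩ := h
  refine ⟨b, e ∘ f, he.comp hf, fun u v huv => ?_⟩
  have := hadj huv
  rw [colorGraph_adj] at this ⊢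
  exact ⟨he.ne this.1, by simpa using this.2⟩

-- Without `hr` the infimum defining `ramseyNumber` could be the junk value `sInf ∅ = 0`.
theorem lt_ramseyNumber_of_not_hasMonoCopy {V : Type*} {G : SimpleGraph V} {r N : ℕ}
    (hr : ∀ c : Sym2 (Fin r) → Bool, HasMonoCopy G c) (c : Sym2 (Fin N) → Bool)
    (hc : ¬ HasMonoCopy G c) : N < ramseyNumber G := by
  unfold ramseyNumber
  refine Nat.lt_of_succ_le (le_csInf ⟨r, hr⟩ fun s hs => ?_)
  by_contra! hsN
  exact hc (.of_comp_map (Fin.castLE_injective (by omega : s ≤ N)) (hs _))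

def sameSideColoring {W : Type*} (σ : W → Bool) : Sym2 W → Bool :=
  Sym2.lift ⟨fun u v => σ u == σ v, fun _ _ => Bool.beq_comm⟩

theorem sameSideColoring_mk {W : Type*} (σ : W → Bool) (u v : W) :
    sameSideColoring σ s(u, v) = true ↔ σ u = σ v := by
  simp [sameSideColoring]

theorem bistar_ramsey_lower (m n : ℕ) (hmn : m ≤ n) :
    (∀ c : Sym2 (Fin (2 * m + n + 1)) → Bool,
      (∀ u v : Fin (2 * m + n + 1), u ≠ v →
        (c s(u, v) = true ↔ (((u : ℕ) < m + n + 1) ↔ ((v : ℕ) < m + n + 1)))) →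
      ¬ HasMonoCopy (bistar m n) c) ∧
    2 * m + n + 2 ≤ ramseyNumber (bistar m n) := by
  set σ : Fin (2 * m + n + 1) → Bool := fun u => decide ((u : ℕ) < m + n + 1)
  have htrue : #{u | σ u = true} = m + n + 1 := by
    simp only [σ, decide_eq_true_eq, Fin.card_filter_val_lt]
    omega
  have hfalse : #{u | σ u = false} = m := by
    have := card_filter_add_card_filter_not (s := univ) (p := (σ · = true))
    simp only [card_univ, Fintype.card_fin, Bool.not_eq_true] at this
    omega
  have hno_copy (c : Sym2 (Fin (2 * m + n + 1)) → Bool)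
      (hc : ∀ u v, u ≠ v → (c s(u, v) = true ↔ σ u = σ v)) : ¬ HasMonoCopy (bistar m n) c :=
    not_hasMonoCopy_bistar_of_card_fiber_le σ hmn c hc htrue.le hfalse.le
  refine ⟨fun c hc => hno_copy c fun u v huv => (hc u v huv).trans decide_eq_decide.symm, ?_⟩
  exact lt_ramseyNumber_of_not_hasMonoCopy (r := 2 * (m + n) + 3)
    (fun c => hasMonoCopy_bistar (by simp) c) (sameSideColoring σ)
    (hno_copy _ fun u v _ => sameSideColoring_mk σ u v)
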